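/- arXiv:2510.18631 — 4 statements merged into one kernel-verified Lean document; each statement's English description precedes it below -/
import Mathlib

section
/- There is no arg-IAF whose set of completions is equivalent (under ≈) to the two-element set of AFs { ⟨{a}, ∅⟩ , ⟨{a, b, c}, ∅⟩ } (where a, b, c are distinct arguments). Hence rul-ISAFs are not ≼ arg-IAFs. -/
/-- An abstract argumentation framework: a set of arguments and a defeat relation. -/
abbrev AF (α : Type*) := Set α × Set (α × α)

/-- The union of all argument sets of a set of AFs. -/
def unionArgs {α : Type*} (S : Set (AF α)) : Set α := ⋃ af ∈ S, af.1

/-- Equivalence of two sets of AFs: a bijection between the unions of their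
argument sets mapping one set of frameworks exactly onto the other. -/
def AFEquiv {α : Type*} (S S' : Set (AF α)) : Prop :=
  ∃ i : α → α, Set.BijOn i (unionArgs S) (unionArgs S') ∧
    (fun af : AF α => (i '' af.1, Prod.map i i '' af.2)) '' S = S'

/-- The completions of the arg-IAF `⟨F, Q, D⟩`. -/
def comIAF {α : Type*} (F Q : Set α) (D : Set (α × α)) : Set (AF α) :=
  {af | ∃ A : Set α, F ⊆ A ∧ A ⊆ F ∪ Q ∧ af = (A, D ∩ A ×ˢ A)}

/-- Theorem (rul-ISAFs ⋠ arg-IAFs): no arg-IAF has a set of completions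
equivalent to `{⟨{a},∅⟩, ⟨{a,b,c},∅⟩}` for distinct arguments `a, b, c`. -/
theorem no_arg_iaf_for_rul_witness {α : Type*} (a b c : α)
    (hab : a ≠ b) (hac : a ≠ c) (hbc : b ≠ c)
    (F Q : Set α) (D : Set (α × α))
    (hdis : Disjoint F Q) (hD : D ⊆ (F ∪ Q) ×ˢ (F ∪ Q)) :
    ¬ AFEquiv (comIAF F Q D)
        ({(({a} : Set α), (∅ : Set (α × α))),
          (({a, b, c} : Set α), (∅ : Set (α × α)))} : Set (AF α)) := by
  rintro ⟨i, hbij, himg⟩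
  -- b is in the union of arguments of the target set
  have hbU : b ∈ unionArgs ({(({a} : Set α), (∅ : Set (α × α))),
      (({a, b, c} : Set α), (∅ : Set (α × α)))} : Set (AF α)) := by
    simp [unionArgs]
  obtain ⟨y, hyU, hiy⟩ := hbij.surjOn hbU
  -- y belongs to F ∪ Q
  have hyFQ : y ∈ F ∪ Q := by
    simp only [unionArgs, Set.mem_iUnion] at hyU
    obtain ⟨af, haf, hy⟩ := hyU
    obtain ⟨A, _, hAsub, haf'⟩ := haf
    subst haf'
    exact hAsub hy
  -- obtain the preimage completion of ({a}, ∅)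
  have hmem : (({a} : Set α), (∅ : Set (α × α))) ∈
      (fun af : AF α => (i '' af.1, Prod.map i i '' af.2)) '' (comIAF F Q D) := by
    rw [himg]; exact Set.mem_insert _ _
  obtain ⟨af₁, haf₁, heq₁⟩ := hmem
  obtain ⟨A₁, hFA₁, hA₁FQ, haf₁'⟩ := haf₁
  subst haf₁'
  have hiA₁ : i '' A₁ = {a} := congrArg Prod.fst heq₁
  -- y is not in F (else i y = a ≠ b)
  have hyQ : y ∈ Q := by
    rcases hyFQ with hyF | hyQ
    · exfalso
      have : i y ∈ i '' A₁ := ⟨y, hFA₁ hyF, rfl⟩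
      rw [hiA₁, hiy] at this
      exact hab (Set.mem_singleton_iff.mp this).symm
    · exact hyQ
  -- the completion with A₁ ∪ {y}
  have hmem₃ : (insert y A₁, D ∩ (insert y A₁) ×ˢ (insert y A₁)) ∈ comIAF F Q D :=
    ⟨insert y A₁, fun x hx => Set.mem_insert_of_mem _ (hFA₁ hx),
      Set.insert_subset (Or.inr hyQ) hA₁FQ, rfl⟩
  have himg₃ := himg ▸ Set.mem_image_of_mem
    (fun af : AF α => (i '' af.1, Prod.map i i '' af.2)) hmem₃
  have hfst : i '' insert y A₁ = insert b {a} := by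
    rw [Set.image_insert_eq, hiA₁, hiy]
  rcases himg₃ with h | h
  · have : insert b ({a} : Set α) = {a} := by
      have := congrArg Prod.fst h
      simpa [hfst] using this
    have hb : b ∈ ({a} : Set α) := this ▸ Set.mem_insert b {a}
    exact hab (Set.mem_singleton_iff.mp hb).symm
  · have h2 : insert b ({a} : Set α) = {a, b, c} := by
      have := congrArg Prod.fst h
      simpa [hfst] using this
    have hc : c ∈ insert b ({a} : Set α) := by
      rw [h2]; simp
    rcases hc with hc | hc
    · exact hbc hc.symm
    · exact hac (Set.mem_singleton_iff.mp hc).symm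
end

section
/- There is no arg-IAF whose set of completions is equivalent (under ≈) to { ⟨{a}, ∅⟩ , ⟨{a, b, c}, ∅⟩ } where b, c ∉ {a}; more generally, for any arg-IAF, if two distinct arguments x, y each appear in some but not all completions, then there exists a completion containing x but not y. Hence prem-ISAFs are not ≼ arg-IAFs. -/
lemma unionArgs_comIAF {α : Type*} (F Q : Set α) (D : Set (α × α)) :
    unionArgs (comIAF F Q D) = F ∪ Q := by
  apply Set.Subset.antisymm
  · intro z hz
    simp only [unionArgs, Set.mem_iUnion] at hz
    obtain ⟨af, ⟨A, hFA, hAFQ, rfl⟩, hzA⟩ := hz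
    exact hAFQ hzA
  · intro z hz
    simp only [unionArgs, Set.mem_iUnion]
    exact ⟨(F ∪ Q, D ∩ (F ∪ Q) ×ˢ (F ∪ Q)), ⟨F ∪ Q, Set.subset_union_left,
      le_refl _, rfl⟩, hz⟩

/-- (i) In any arg-IAF, for distinct uncertain arguments `x, y` there is a
completion containing `x` but not `y`; (ii) hence no arg-IAF has a set of
completions equivalent to `{⟨{a},∅⟩, ⟨{a,b,c},∅⟩}` (so prem-ISAFs ⋠ arg-IAFs). -/
theorem prem_isafs_not_le_arg_iafs {α : Type*} :
    (∀ (F Q : Set α) (D : Set (α × α)) (x y : α), Disjoint F Q →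
        x ∈ Q → y ∈ Q → x ≠ y →
        ∃ af ∈ comIAF F Q D, x ∈ af.1 ∧ y ∉ af.1) ∧
    (∀ a b c : α, a ≠ b → a ≠ c → b ≠ c →
      ∀ (F Q : Set α) (D : Set (α × α)), Disjoint F Q → D ⊆ (F ∪ Q) ×ˢ (F ∪ Q) →
        ¬ AFEquiv (comIAF F Q D)
            ({(({a} : Set α), (∅ : Set (α × α))),
              (({a, b, c} : Set α), (∅ : Set (α × α)))} : Set (AF α))) := by
  have part1 : ∀ (F Q : Set α) (D : Set (α × α)) (x y : α), Disjoint F Q →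
      x ∈ Q → y ∈ Q → x ≠ y →
      ∃ af ∈ comIAF F Q D, x ∈ af.1 ∧ y ∉ af.1 := by
    intro F Q D x y hdisj hx hy hxy
    refine ⟨(F ∪ {x}, D ∩ (F ∪ {x}) ×ˢ (F ∪ {x})),
      ⟨F ∪ {x}, Set.subset_union_left, ?_, rfl⟩, Or.inr rfl, ?_⟩
    · exact Set.union_subset_union_right F (by simpa using hx)
    · rintro (hyF | hyx)
      · exact hdisj.ne_of_mem hyF hy rfl
      · exact hxy hyx.symm
  refine ⟨part1, ?_⟩
  intro a b c hab hac hbc F Q D hdisj _ hEq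
  obtain ⟨i, hbij, himg⟩ := hEq
  rw [unionArgs_comIAF] at hbij
  have hU' : unionArgs ({(({a} : Set α), (∅ : Set (α × α))),
      (({a, b, c} : Set α), (∅ : Set (α × α)))} : Set (AF α)) = {a, b, c} := by
    simp [unionArgs, Set.insert_union]
    ext z; simp; tauto
  rw [hU'] at hbij
  -- there is a completion mapping to ({a}, ∅)
  have hmem1 : (({a} : Set α), (∅ : Set (α × α))) ∈
      (fun af : AF α => (i '' af.1, Prod.map i i '' af.2)) '' (comIAF F Q D) := by
    rw [himg]; exact Or.inl rfl
  obtain ⟨af1, haf1, heq1⟩ := hmem1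
  obtain ⟨A1, hFA1, hA1FQ, rfl⟩ := haf1
  have hA1img : i '' A1 = {a} := congrArg Prod.fst heq1
  -- preimages of b and c
  obtain ⟨x, hxFQ, hix⟩ := hbij.surjOn (show b ∈ ({a, b, c} : Set α) by simp)
  obtain ⟨y, hyFQ, hiy⟩ := hbij.surjOn (show c ∈ ({a, b, c} : Set α) by simp)
  have hxQ : x ∈ Q := by
    rcases hxFQ with hxF | hxQ
    · exfalso
      have : i x ∈ i '' A1 := ⟨x, hFA1 hxF, rfl⟩
      rw [hA1img, hix] at this
      exact hab this.symm
    · exact hxQ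
  have hyQ : y ∈ Q := by
    rcases hyFQ with hyF | hyQ
    · exfalso
      have : i y ∈ i '' A1 := ⟨y, hFA1 hyF, rfl⟩
      rw [hA1img, hiy] at this
      exact hac this.symm
    · exact hyQ
  have hxy : x ≠ y := by
    rintro rfl; rw [hix] at hiy; exact hbc hiy
  obtain ⟨af, hafmem, hxaf, hyaf⟩ := part1 F Q D x y hdisj hxQ hyQ hxy
  have hafimg : (fun af : AF α => (i '' af.1, Prod.map i i '' af.2)) af ∈
      ({(({a} : Set α), (∅ : Set (α × α))),
        (({a, b, c} : Set α), (∅ : Set (α × α)))} : Set (AF α)) := by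
    rw [← himg]; exact ⟨af, hafmem, rfl⟩
  obtain ⟨A, hFA, hAFQ, rfl⟩ := hafmem
  rcases hafimg with h1 | h2
  · have hAimg : i '' A = {a} := congrArg Prod.fst h1
    have : i x ∈ i '' A := ⟨x, hxaf, rfl⟩
    rw [hAimg, hix] at this
    exact hab this.symm
  · have hAimg : i '' A = {a, b, c} := congrArg Prod.fst h2
    have : c ∈ i '' A := by rw [hAimg]; simp
    obtain ⟨z, hzA, hiz⟩ := this
    have : z = y := hbij.injOn (hAFQ hzA) hyFQ (by rw [hiz, hiy])
    exact hyaf (this ▸ hzA)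
end

section
/- Abstract version of Theorem 'rul-ISAFs ≼ imp-arg-IAFs': let U be a set of arguments with R? : U → Set(R^?) (R^? the uncertain rules) and fixed defeat D ⊆ U×U; let A^F = A(∅), A^? = U \ A^F, and Δ = { (Γ, X) ∈ (Set(A^?)\{∅}) × A^? : R?(X) ⊆ R?(Γ) }. Then the AFs ⟨A(S), D∩(A(S)×A(S))⟩ for S ⊆ R^? are exactly the AFs ⟨A*, D∩(A*×A*)⟩ with A^F ⊆ A* ⊆ U such that for all (Γ,X) ∈ Δ, Γ ⊆ A* implies X ∈ A*. -/
/-- Theorem (rul-ISAFs ≼ imp-arg-IAFs, abstract version): the abstract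
completions of a rul-ISAF are exactly the completions of the imp-arg-IAF with
fixed arguments `A(∅)`, uncertain arguments `U \ A(∅)`, defeats `D` restricted,
and implicative dependencies `IMPLY(Γ, X)` for `R?(X) ⊆ R?(Γ)`. -/
theorem rul_isaf_as_imp_arg_iaf {U R : Type*} (r : U → Set R) (D : Set (U × U)) :
    {af : Set U × Set (U × U) |
        ∃ S : Set R, af = ({X | r X ⊆ S}, D ∩ ({X | r X ⊆ S} ×ˢ {X | r X ⊆ S}))}
      =
    {af : Set U × Set (U × U) |
        ∃ A : Set U,
          {X | r X ⊆ (∅ : Set R)} ⊆ A ∧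
          (∀ (Γ : Set U) (X : U), Γ.Nonempty →
              Γ ⊆ {Y | ¬ r Y ⊆ (∅ : Set R)} → X ∈ {Y | ¬ r Y ⊆ (∅ : Set R)} →
              r X ⊆ (⋃ Y ∈ Γ, r Y) → Γ ⊆ A → X ∈ A) ∧
          af = (A, D ∩ (A ×ˢ A))} := by
  ext af
  simp only [Set.mem_setOf_eq]
  constructor
  · rintro ⟨S, rfl⟩
    refine ⟨{X | r X ⊆ S}, ?_, ?_, rfl⟩
    · intro X hX
      exact hX.trans (Set.empty_subset S)
    · intro Γ X _ _ _ hrX hΓA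
      intro s hs
      rcases Set.mem_iUnion₂.mp (hrX hs) with ⟨Y, hY, hsY⟩
      exact hΓA hY hsY
  · rintro ⟨A, hF, hcl, rfl⟩
    refine ⟨⋃ Y ∈ A, r Y, ?_⟩
    have hAeq : {X | r X ⊆ ⋃ Y ∈ A, r Y} = A := by
      ext X
      simp only [Set.mem_setOf_eq]
      constructor
      · intro hX
        by_cases hXe : r X ⊆ (∅ : Set R)
        · exact hF hXe
        · set Γ : Set U := {Y ∈ A | ¬ r Y ⊆ (∅ : Set R)} with hΓ
          have hsub : (⋃ Y ∈ A, r Y) ⊆ ⋃ Y ∈ Γ, r Y := by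
            intro s hs
            rcases Set.mem_iUnion₂.mp hs with ⟨Y, hY, hsY⟩
            have : ¬ r Y ⊆ (∅ : Set R) := fun h => h hsY
            exact Set.mem_iUnion₂.mpr ⟨Y, ⟨hY, this⟩, hsY⟩
          have hne : Γ.Nonempty := by
            rcases Set.not_subset.mp hXe with ⟨s, hs, -⟩
            rcases Set.mem_iUnion₂.mp (hX hs) with ⟨Y, hY, hsY⟩
            exact ⟨Y, hY, fun h => h hsY⟩
          exact hcl Γ X hne (fun Y hY => hY.2) hXe (hX.trans hsub)
            (fun Y hY => hY.1)
      · intro hX s hs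
        exact Set.mem_iUnion₂.mpr ⟨X, hX, hs⟩
    rw [hAeq]
end

section
/- Every family of subsets of a set V that is the completion family of an arg-IAF (i.e., an 'interval' family {A* : F ⊆ A* ⊆ F ∪ Q} for disjoint F, Q) is realizable as {A(S) : S ⊆ Q} for the function Prem? : F ∪ Q → Set(Q) given by Prem?(x) = ∅ for x ∈ F and Prem?(x) = {x} for x ∈ Q; consequently arg-IAFs ≼ prem-ISAFs at the level of argument sets. -/
/-- Theorem (arg-IAFs ≼ prem-ISAFs, at the level of argument sets): the
interval completion family `{A* : F ⊆ A* ⊆ F ∪ Q}` of an arg-IAF is realized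
as `{A(S) : S ⊆ Q}` for the prem-ISAF model with `Prem?(x) = ∅` for `x ∈ F`
and `Prem?(x) = {x}` for `x ∈ Q`, where `A(S) = {x ∈ F ∪ Q | Prem?(x) ⊆ S}`
(via the identity map on arguments). -/
theorem arg_iaf_le_prem_isaf {α : Type*} (F Q : Set α) (hdis : Disjoint F Q)
    (prem : α → Set α)
    (hF : ∀ x ∈ F, prem x = ∅) (hQ : ∀ x ∈ Q, prem x = {x}) :
    {A : Set α | ∃ S : Set α, S ⊆ Q ∧ A = {x ∈ F ∪ Q | prem x ⊆ S}} =
      {A : Set α | F ⊆ A ∧ A ⊆ F ∪ Q} := by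
  ext A
  constructor
  · rintro ⟨S, hS, rfl⟩
    constructor
    · intro x hx
      exact ⟨Or.inl hx, by simp [hF x hx]⟩
    · intro x hx
      exact hx.1
  · rintro ⟨h1, h2⟩
    refine ⟨A ∩ Q, Set.inter_subset_right, ?_⟩
    ext x
    simp only [Set.mem_setOf_eq]
    constructor
    · intro hx
      rcases h2 hx with hxF | hxQ
      · exact ⟨Or.inl hxF, by simp [hF x hxF]⟩
      · refine ⟨Or.inr hxQ, ?_⟩
        rw [hQ x hxQ]
        simpa using ⟨hx, hxQ⟩
    · rintro ⟨hx1, hx2⟩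
      rcases hx1 with hxF | hxQ
      · exact h1 hxF
      · rw [hQ x hxQ] at hx2
        exact (hx2 rfl).1
end
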